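/- arXiv:2406.17094 — 3 statements merged into one kernel-verified Lean document; each statement's English description precedes it below -/
import Mathlib

section
/- With a proportional fee 0 < φ < 1 (only the fraction (1−φ) of input counts toward the trade, fee retained outside reserves), a round-trip swap strictly loses tokens: swapping Δx > 0 of A to B and the proceeds back to A returns strictly less than Δx. -/
/-- With a proportional fee `0 < φ < 1`, a round-trip swap strictly loses tokens:
swapping `dx > 0` of A to B (receiving `out1`) and then swapping `out1` back
returns strictly less than `dx`. -/
theorem cpmm_fee_round_trip_loss (x y dx φ : ℝ) (hx : 0 < x) (hy : 0 < y)
    (hdx : 0 < dx) (hφ0 : 0 < φ) (hφ1 : φ < 1) :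
    (x + (1 - φ) * dx) * ((1 - φ) * (y * (1 - φ) * dx / (x + (1 - φ) * dx))) /
      ((y - y * (1 - φ) * dx / (x + (1 - φ) * dx)) +
        (1 - φ) * (y * (1 - φ) * dx / (x + (1 - φ) * dx))) < dx := by
  have hf : 0 < 1 - φ := by linarith
  have hX : 0 < x + (1 - φ) * dx := by nlinarith
  have hout : y * (1 - φ) * dx / (x + (1 - φ) * dx) < y := by
    rw [div_lt_iff₀ hX]; nlinarith
  have houtpos : 0 < y * (1 - φ) * dx / (x + (1 - φ) * dx) := by positivity
  have hden : 0 < (y - y * (1 - φ) * dx / (x + (1 - φ) * dx)) +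
      (1 - φ) * (y * (1 - φ) * dx / (x + (1 - φ) * dx)) := by nlinarith
  rw [div_lt_iff₀ hden]
  have h1 : y * (1 - φ) * dx / (x + (1 - φ) * dx) * (x + (1 - φ) * dx)
      = y * (1 - φ) * dx := div_mul_cancel₀ _ (ne_of_gt hX)
  set o := y * (1 - φ) * dx / (x + (1 - φ) * dx) with ho
  have key : (x + (1 - φ) * dx) * ((1 - φ) * o) = (1 - φ) * ((1 - φ) * (y * dx)) := by
    linear_combination (1 - φ) * h1
  nlinarith [mul_lt_mul_of_pos_left hout (mul_pos hφ0 hdx), mul_pos (mul_pos hφ0 hdx) (mul_pos hy hf)]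
end

section
/- Liveness under bounded epochs: if in every epoch at most the first leader can be faulty and the leader-change mechanism replaces a faulty leader within one round, then any valid transaction submitted at round t is included in a meta-block by round t + 2 + q, where q is the number of full pending blocks ahead of it in the queue. -/
lemma sidechain_aux (c t : ℕ) (honest : ℕ → Prop) (ahead : ℕ → ℕ)
    (hstep : ∀ r, t < r →
      (honest r → ahead (r + 1) = ahead r - c) ∧ (¬ honest r → ahead (r + 1) = ahead r))
    (s m : ℕ) (hs : t < s) (h : ahead s = m * c)
    (hon : ∀ r, s ≤ r → honest r) :
    ∀ k, ahead (s + k) = (m - k) * c := by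
  intro k
  induction k with
  | zero => simpa using h
  | succ k ih =>
    have hts : t < s + k := lt_of_lt_of_le hs (Nat.le_add_right _ _)
    have hh : honest (s + k) := hon _ (Nat.le_add_right _ _)
    have := (hstep (s + k) hts).1 hh
    rw [show s + (k + 1) = (s + k) + 1 from rfl, this, ih]
    rw [Nat.sub_succ]
    cases h' : m - k with
    | zero => simp
    | succ n => simp [Nat.succ_mul]

/-- Liveness under bounded faults: blocks have capacity `c > 0`; a transaction is
submitted at round `t` with `q` full pending blocks (`q * c` transactions) ahead of it
at the start of round `t+1`; among the rounds after `t`, only round `t+1` may have a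
faulty leader (leader-change replaces it within one round); an honest leader processes
the oldest `c` pending transactions each round. Then there is a round `r ≤ t + 2 + q`
with an honest leader at which fewer than `c` transactions remain ahead, i.e. the
transaction is included in a meta-block by round `t + 2 + q`. -/
theorem sidechain_liveness (c q t : ℕ) (hc : 0 < c)
    (honest : ℕ → Prop) (ahead : ℕ → ℕ)
    (hfault : ∀ r, t + 1 < r → honest r)
    (h0 : ahead (t + 1) = q * c)
    (hstep : ∀ r, t < r →
      (honest r → ahead (r + 1) = ahead r - c) ∧ (¬ honest r → ahead (r + 1) = ahead r)) :
    ∃ r, r ≤ t + 2 + q ∧ honest r ∧ ahead r < c := by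
  by_cases h1 : honest (t + 1)
  · have hon : ∀ r, t + 1 ≤ r → honest r := by
      intro r hr
      rcases eq_or_lt_of_le hr with h | h
      · exact h ▸ h1
      · exact hfault r h
    have := sidechain_aux c t honest ahead hstep (t + 1) q (Nat.lt_succ_self t) h0 hon q
    refine ⟨t + 1 + q, by omega, hon _ (Nat.le_add_right _ _), ?_⟩
    simpa using this.trans_lt (by simpa using hc)
  · have h2 : ahead (t + 2) = q * c := by
      have := (hstep (t + 1) (Nat.lt_succ_self t)).2 h1
      rw [show t + 2 = (t + 1) + 1 from rfl, this, h0]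
    have hon : ∀ r, t + 2 ≤ r → honest r := fun r hr => hfault r (by omega)
    have := sidechain_aux c t honest ahead hstep (t + 2) q (by omega) h2 hon q
    refine ⟨t + 2 + q, le_refl _, hon _ (Nat.le_add_right _ _), ?_⟩
    simpa using this.trans_lt (by simpa using hc)
end

section
/- Deposit sufficiency for epoch snapshot trading: if a user's epoch activity consists of swaps whose inputs in token A total I_A and outputs in token A total O_A (similarly I_B, O_B), then processing them in any order with running-balance checks succeeds whenever the initial deposit satisfies d_A ≥ I_A and d_B ≥ I_B; i.e., depositing the gross input amounts (ignoring interim accrued outputs) always suffices. -/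
/-- A swap: direction (`true` = input token A, output token B), input amount, output
amount. Processing deducts the input from one token's running balance and adds the
output to the other. -/
def swapStep (b : ℤ × ℤ) (tx : Bool × ℤ × ℤ) : ℤ × ℤ :=
  if tx.1 then (b.1 - tx.2.1, b.2 + tx.2.2) else (b.1 + tx.2.2, b.2 - tx.2.1)

/-!
After any prefix of the swaps, the balance of a token equals the deposit, minus the inputs
drawn from it, plus the outputs credited to it. Outputs are nonnegative, so before swap `n`
the balance is at least the deposit minus the inputs of the earlier swaps; by the deposit
assumption this is at least the input of swap `n` plus those of the later swaps, all
nonnegative.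
-/

/-- Token `true` is A, token `false` is B, matching the direction flag of a swap. -/
def tokenBalance (c : Bool) (x : ℤ × ℤ) : ℤ :=
  if c then x.1 else x.2

def inputTotal (c : Bool) (P : List (Bool × ℤ × ℤ)) : ℤ :=
  ((P.filter (fun tx => tx.1 = c)).map (fun tx => tx.2.1)).sum

/-- Outputs of the swaps with input token `c`; they are credited to the other token. -/
def outputTotal (c : Bool) (P : List (Bool × ℤ × ℤ)) : ℤ :=
  ((P.filter (fun tx => tx.1 = c)).map (fun tx => tx.2.2)).sum

theorem tokenBalance_foldl_swapStep (c : Bool) (P : List (Bool × ℤ × ℤ)) (x : ℤ × ℤ) :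
    tokenBalance c (P.foldl swapStep x) =
      tokenBalance c x - inputTotal c P + outputTotal (!c) P := by
  induction P generalizing x with
  | nil => simp [inputTotal, outputTotal]
  | cons tx P ih =>
    obtain ⟨d, i, o⟩ := tx
    rw [List.foldl_cons, ih]
    cases c <;> cases d <;>
      simp only [tokenBalance, swapStep, inputTotal, outputTotal, List.filter_cons, List.map_cons,
        List.sum_cons, Bool.not_false, Bool.not_true, reduceIte, decide_true, decide_false,
        Bool.false_eq_true, Bool.true_eq_false] <;>
      ring

theorem inputTotal_nonneg (c : Bool) (P : List (Bool × ℤ × ℤ))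
    (hP : ∀ tx ∈ P, 0 ≤ tx.2.1) :
    0 ≤ inputTotal c P :=
  List.sum_nonneg fun _ hy => by
    obtain ⟨tx, htx, rfl⟩ := List.mem_map.1 hy
    exact hP tx (List.mem_of_mem_filter htx)

theorem outputTotal_nonneg (c : Bool) (P : List (Bool × ℤ × ℤ))
    (hP : ∀ tx ∈ P, 0 ≤ tx.2.2) :
    0 ≤ outputTotal c P :=
  List.sum_nonneg fun _ hy => by
    obtain ⟨tx, htx, rfl⟩ := List.mem_map.1 hy
    exact hP tx (List.mem_of_mem_filter htx)

theorem inputTotal_append_cons {c : Bool} (P Q : List (Bool × ℤ × ℤ)) {tx : Bool × ℤ × ℤ}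
    (hc : tx.1 = c) :
    inputTotal c (P ++ tx :: Q) = inputTotal c P + tx.2.1 + inputTotal c Q := by
  simp [inputTotal, List.filter_append, hc, add_assoc]

theorem inputTotal_take_add_le {c : Bool} {L : List (Bool × ℤ × ℤ)}
    (hL : ∀ tx ∈ L, 0 ≤ tx.2.1) {n : ℕ} (h : n < L.length) (hc : L[n].1 = c) :
    inputTotal c (L.take n) + L[n].2.1 ≤ inputTotal c L := by
  have hsplit := inputTotal_append_cons (L.take n) (L.drop (n + 1)) hc
  rw [List.getElem_cons_drop, List.take_append_drop] at hsplit
  have hrest := inputTotal_nonneg c (L.drop (n + 1)) fun tx htx =>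
    hL tx (List.mem_of_mem_drop htx)
  linarith

theorem input_le_tokenBalance_foldl_take {c : Bool} {L : List (Bool × ℤ × ℤ)} {x : ℤ × ℤ}
    (hio : ∀ tx ∈ L, 0 ≤ tx.2.1 ∧ 0 ≤ tx.2.2) (hdeposit : inputTotal c L ≤ tokenBalance c x)
    {n : ℕ} (h : n < L.length) (hc : L[n].1 = c) :
    L[n].2.1 ≤ tokenBalance c ((L.take n).foldl swapStep x) := by
  have hinputs := inputTotal_take_add_le (fun tx htx => (hio tx htx).1) h hc
  have houtputs := outputTotal_nonneg (!c) (L.take n) fun tx htx =>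
    (hio tx (List.mem_of_mem_take htx)).2
  rw [tokenBalance_foldl_swapStep]
  linarith

theorem deposit_gross_input_suffices_general (L : List (Bool × ℤ × ℤ)) (dA dB : ℤ)
    (hio : ∀ tx ∈ L, 0 ≤ tx.2.1 ∧ 0 ≤ tx.2.2)
    (hIA : ((L.filter (fun tx => tx.1 = true)).map (fun tx => tx.2.1)).sum ≤ dA)
    (hIB : ((L.filter (fun tx => tx.1 = false)).map (fun tx => tx.2.1)).sum ≤ dB) :
    ∀ (n : ℕ) (h : n < L.length),
      let b := (L.take n).foldl swapStep (dA, dB)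
      if (L.get ⟨n, h⟩).1 then (L.get ⟨n, h⟩).2.1 ≤ b.1
      else (L.get ⟨n, h⟩).2.1 ≤ b.2 := by
  intro n h
  rcases hc : L[n].1
  · simpa [hc, tokenBalance] using input_le_tokenBalance_foldl_take (x := (dA, dB)) hio hIB h hc
  · simpa [hc, tokenBalance] using input_le_tokenBalance_foldl_take (x := (dA, dB)) hio hIA h hc

/-- Deposit sufficiency for epoch snapshot trading: if the initial deposit covers the
gross total input in each token (`dA ≥ Σ inputs in A`, `dB ≥ Σ inputs in B`), all
amounts being nonnegative, then processing the swaps in any order succeeds: each swap's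
running-balance check (input at most the current balance of the input token) passes. -/
theorem deposit_gross_input_suffices (L : List (Bool × ℤ × ℤ)) (dA dB : ℤ)
    (hdA : 0 ≤ dA) (hdB : 0 ≤ dB)
    (hio : ∀ tx ∈ L, 0 ≤ tx.2.1 ∧ 0 ≤ tx.2.2)
    (hIA : ((L.filter (fun tx => tx.1 = true)).map (fun tx => tx.2.1)).sum ≤ dA)
    (hIB : ((L.filter (fun tx => tx.1 = false)).map (fun tx => tx.2.1)).sum ≤ dB) :
    ∀ (n : ℕ) (h : n < L.length),
      let b := (L.take n).foldl swapStep (dA, dB)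
      if (L.get ⟨n, h⟩).1 then (L.get ⟨n, h⟩).2.1 ≤ b.1
      else (L.get ⟨n, h⟩).2.1 ≤ b.2 :=
  deposit_gross_input_suffices_general L dA dB hio hIA hIB
end
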